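/- Let Ω ⊂ ℝ² be measurable and R > 0. Then sup_{z ∈ ℝ²} ∫_{Ω ∩ D_R(z)} e^{−π|z−w|²/2} dw ≤ 2(1 − e^{−ν(Ω,R)/2}). -/

import Mathlib

open MeasureTheory Complex ContinuousLinearMap
open scoped ENNReal InnerProductSpace RealInnerProductSpace

noncomputable section

namespace QLS

/-- Configuration space `ℝ^d`. -/
abbrev Cfg (d : ℕ) := EuclideanSpace ℝ (Fin d)

/-- The Hilbert space `L²(ℝ^d)`. -/
abbrev L2F (d : ℕ) := MeasureTheory.Lp ℂ 2 (volume : Measure (Cfg d))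

/-- Phase space `ℝ^{2d}`, with points `z = (x, ω)`. -/
abbrev Phase (d : ℕ) := Cfg d × Cfg d

/-- Bounded operators on `L²(ℝ^d)`. -/
abbrev Op (d : ℕ) := L2F d →L[ℂ] L2F d

variable {d : ℕ}

/-- Squared Euclidean norm `|z|²` on phase space. -/
noncomputable def pnormSq (z : Phase d) : ℝ := ‖z.1‖ ^ 2 + ‖z.2‖ ^ 2

/-- Open Euclidean disk of radius `R` centered at `z` in phase space. -/
noncomputable def pdisk (R : ℝ) (z : Phase d) : Set (Phase d) := {w | pnormSq (w - z) < R ^ 2}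

/-- The `R`-measure (maximum Nyquist density w.r.t. disks) `ν(Ω,R)`. -/
noncomputable def nuR (Ω : Set (Phase d)) (R : ℝ) : ℝ :=
  ⨆ z : Phase d, (volume (Ω ∩ pdisk R z)).toReal

/-- The maximum Nyquist density `ν(Ω,Δ) = sup_z |Ω ∩ (z+Δ)|`. -/
noncomputable def nyquist (Ω Δ : Set (Phase d)) : ℝ :=
  ⨆ z : Phase d, (volume (Ω ∩ {w | w - z ∈ Δ})).toReal

/-- `e^{-x}` for an extended-nonnegative-real `x` (so that `e^{-∞} = 0`). -/
noncomputable def expNeg (x : ℝ≥0∞) : ℝ := if x = ∞ then 0 else Real.exp (-x.toReal)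

/-- The time-frequency shift `π(z)f(t) = f(t-x) e^{2πi ω·t}` on the level of functions. -/
noncomputable def tfFun (z : Phase d) (f : Cfg d → ℂ) : Cfg d → ℂ := fun t =>
  f (t - z.1) * Complex.exp (((2 * Real.pi * (inner ℝ z.2 t : ℝ) : ℝ) : ℂ) * Complex.I)

lemma tfFun_norm (z : Phase d) (f : Cfg d → ℂ) (t : Cfg d) :
    ‖tfFun z f t‖ = ‖f (t - z.1)‖ := by
  rw [tfFun, norm_mul, Complex.norm_exp_ofReal_mul_I, mul_one]

lemma measurePreserving_sub_fst (z : Phase d) :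
    MeasurePreserving (fun t : Cfg d => t - z.1) volume volume :=
  measurePreserving_sub_right volume z.1

lemma tfFun_memLp (z : Phase d) (f : L2F d) : MemLp (tfFun z (f : Cfg d → ℂ)) 2 volume := by
  have hmp := measurePreserving_sub_fst z
  have hmeas : AEStronglyMeasurable (tfFun z (f : Cfg d → ℂ)) volume := by
    apply AEStronglyMeasurable.mul
    · exact (Lp.aestronglyMeasurable f).comp_quasiMeasurePreserving hmp.quasiMeasurePreserving
    · apply Continuous.aestronglyMeasurable
      exact Complex.continuous_exp.comp ((Complex.continuous_ofReal.comp
        (continuous_const.mul (continuous_const.inner continuous_id))).mul continuous_const)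
  refine ⟨hmeas, ?_⟩
  have h1 : eLpNorm (tfFun z (f : Cfg d → ℂ)) 2 volume
      = eLpNorm ((f : Cfg d → ℂ) ∘ fun t => t - z.1) 2 volume := by
    apply eLpNorm_congr_norm_ae
    filter_upwards with t
    simpa using tfFun_norm z (f : Cfg d → ℂ) t
  rw [h1, eLpNorm_comp_measurePreserving (Lp.aestronglyMeasurable f) hmp]
  exact Lp.eLpNorm_lt_top f

/-- The time-frequency shift as an element of `L²(ℝ^d)` for `f ∈ L²(ℝ^d)`. -/
noncomputable def tfShiftFun (z : Phase d) (f : L2F d) : L2F d :=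
  MemLp.toLp _ (tfFun_memLp z f)

lemma tfShiftFun_coe (z : Phase d) (f : L2F d) :
    (tfShiftFun z f : Cfg d → ℂ) =ᵐ[volume] tfFun z (f : Cfg d → ℂ) :=
  MemLp.coeFn_toLp _

lemma tfFun_congr (z : Phase d) {f g : Cfg d → ℂ} (h : f =ᵐ[volume] g) :
    tfFun z f =ᵐ[volume] tfFun z g := by
  have h2 : (fun t : Cfg d => f (t - z.1)) =ᵐ[volume] fun t => g (t - z.1) :=
    (measurePreserving_sub_fst z).quasiMeasurePreserving.ae_eq_comp h
  filter_upwards [h2] with t ht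
  simp only [tfFun, ht]

lemma tfShiftFun_add (z : Phase d) (f g : L2F d) :
    tfShiftFun z (f + g) = tfShiftFun z f + tfShiftFun z g := by
  apply Lp.ext
  have h1 := tfShiftFun_coe z (f + g)
  have h2 := tfShiftFun_coe z f
  have h3 := tfShiftFun_coe z g
  have h4 : tfFun z ((f + g : L2F d) : Cfg d → ℂ)
      =ᵐ[volume] tfFun z ((f : Cfg d → ℂ) + (g : Cfg d → ℂ)) :=
    tfFun_congr z (Lp.coeFn_add f g)
  filter_upwards [h1, h2, h3, h4, Lp.coeFn_add (tfShiftFun z f) (tfShiftFun z g)]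
    with t ht1 ht2 ht3 ht4 ht5
  rw [ht1, ht4, ht5, Pi.add_apply, ht2, ht3]
  simp [tfFun, Pi.add_apply, add_mul]

lemma tfShiftFun_smul (z : Phase d) (c : ℂ) (f : L2F d) :
    tfShiftFun z (c • f) = c • tfShiftFun z f := by
  apply Lp.ext
  have h1 := tfShiftFun_coe z (c • f)
  have h2 := tfShiftFun_coe z f
  have h4 : tfFun z ((c • f : L2F d) : Cfg d → ℂ)
      =ᵐ[volume] tfFun z (c • (f : Cfg d → ℂ)) :=
    tfFun_congr z (Lp.coeFn_smul c f)
  filter_upwards [h1, h2, h4, Lp.coeFn_smul c (tfShiftFun z f)] with t ht1 ht2 ht4 ht5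
  rw [ht1, ht4, ht5, Pi.smul_apply, ht2]
  simp only [tfFun, Pi.smul_apply, smul_eq_mul]
  ring

lemma tfShiftFun_norm (z : Phase d) (f : L2F d) : ‖tfShiftFun z f‖ = ‖f‖ := by
  rw [tfShiftFun, Lp.norm_toLp]
  have h1 : eLpNorm (tfFun z (f : Cfg d → ℂ)) 2 volume
      = eLpNorm ((f : Cfg d → ℂ) ∘ fun t => t - z.1) 2 volume := by
    apply eLpNorm_congr_norm_ae
    filter_upwards with t
    simpa using tfFun_norm z (f : Cfg d → ℂ) t
  rw [h1, eLpNorm_comp_measurePreserving (Lp.aestronglyMeasurable f)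
    (measurePreserving_sub_fst z), Lp.norm_def]

/-- The time-frequency shift, as a linear map. -/
noncomputable def tfShiftLM (z : Phase d) : L2F d →ₗ[ℂ] L2F d where
  toFun := tfShiftFun z
  map_add' := tfShiftFun_add z
  map_smul' := tfShiftFun_smul z

/-- The time-frequency shift `π(z)` as a bounded operator on `L²(ℝ^d)`. -/
noncomputable def tfShift (z : Phase d) : Op d :=
  LinearMap.mkContinuous (tfShiftLM z) 1
    (fun f => by simp [tfShiftLM, tfShiftFun_norm z f])

/-- An orthonormal (Hilbert) basis of `L²(ℝ^d)`, used to define Hilbert-Schmidt norms,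
inner products and traces. -/
noncomputable def hsIdx (d : ℕ) : Set (L2F d) := (exists_hilbertBasis ℂ (L2F d)).choose

lemma hsIdx_spec (d : ℕ) : ∃ b : HilbertBasis (hsIdx d) ℂ (L2F d), ⇑b = Subtype.val :=
  (exists_hilbertBasis ℂ (L2F d)).choose_spec

attribute [irreducible] hsIdx

noncomputable def hsONB (d : ℕ) : HilbertBasis (hsIdx d) ℂ (L2F d) := (hsIdx_spec d).choose

attribute [irreducible] hsONB

/-- `T` is a Hilbert-Schmidt operator. -/
noncomputable def IsHS (T : Op d) : Prop := Summable fun i : hsIdx d => ‖T (hsONB d i)‖ ^ 2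

/-- The Hilbert-Schmidt norm `‖T‖_{S²}`. -/
noncomputable def hsNorm (T : Op d) : ℝ := Real.sqrt (∑' i : hsIdx d, ‖T (hsONB d i)‖ ^ 2)

/-- The Hilbert-Schmidt inner product `⟨A,B⟩_{S²} = tr(B*A)` (linear in `A`). -/
noncomputable def hsInner (A B : Op d) : ℂ := ∑' i : hsIdx d, (inner ℂ (B (hsONB d i)) (A (hsONB d i)) : ℂ)

/-- The trace of an operator, `tr(T) = Σ ⟨e_i, T e_i⟩`. -/
noncomputable def traceOp (T : Op d) : ℂ := ∑' i : hsIdx d, (inner ℂ ((hsONB d i : L2F d)) (T (hsONB d i)) : ℂ)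

/-- The operator short-time Fourier transform `𝔙_γ ρ(z) = γ* π(z)* ρ`. -/
noncomputable def opSTFT (γ ρ : Op d) (z : Phase d) : Op d :=
  ((adjoint γ).comp (adjoint (tfShift z))).comp ρ

/-- The vector-valued STFT with operator window, `𝔙_γ f(z) = γ* π(z)* f`. -/
noncomputable def vecSTFT (γ : Op d) (f : L2F d) (z : Phase d) : L2F d :=
  (adjoint γ) ((adjoint (tfShift z)) f)

/-- The classical STFT `V_g f(z) = ⟨f, π(z) g⟩` (with the paper's inner product, which is
linear in the first argument; in Mathlib's convention this is `⟪π(z)g, f⟫`). -/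
noncomputable def stft (g f : L2F d) (z : Phase d) : ℂ := (inner ℂ (tfShift z g) f : ℂ)

/-- The rank-one operator `f ⊗ g = ⟨·, g⟩ f`. -/
noncomputable def rankOne (f g : L2F d) : Op d := (innerSL ℂ g).smulRight f

/-- The class `𝔐¹` of admissible operators: `γ ∈ S²` with `𝔙_γ γ ∈ L¹(ℝ^{2d}, S²)`. -/
noncomputable def MemM1 (γ : Op d) : Prop :=
  IsHS γ ∧ Integrable (fun z : Phase d => hsNorm (opSTFT γ γ z)) volume

/-- Membership in `𝔐^p` (with respect to the window `γ₀ = h₀ ⊗ h₀`):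
`𝔙_{γ₀} ρ ∈ L^p(ℝ^{2d}, S²)`. -/
noncomputable def MemMp (γ0 : Op d) (p : ℝ) (ρ : Op d) : Prop :=
  Integrable (fun z : Phase d => hsNorm (opSTFT γ0 ρ z) ^ p) volume

/-- The parity operator `Pf(t) = f(-t)` at the level of functions. -/
noncomputable def parityFun (f : Cfg d → ℂ) : Cfg d → ℂ := fun t => f (-t)

lemma parityFun_memLp (f : L2F d) : MemLp (parityFun (f : Cfg d → ℂ)) 2 volume := by
  have hmp : MeasurePreserving (fun t : Cfg d => -t) volume volume :=
    Measure.measurePreserving_neg volume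
  refine ⟨(Lp.aestronglyMeasurable f).comp_quasiMeasurePreserving hmp.quasiMeasurePreserving, ?_⟩
  have h1 : eLpNorm (parityFun (f : Cfg d → ℂ)) 2 volume
      = eLpNorm ((f : Cfg d → ℂ) ∘ fun t => -t) 2 volume := rfl
  rw [h1, eLpNorm_comp_measurePreserving (Lp.aestronglyMeasurable f) hmp]
  exact Lp.eLpNorm_lt_top f

noncomputable def parityOpFun (f : L2F d) : L2F d := MemLp.toLp _ (parityFun_memLp f)

lemma parityOpFun_coe (f : L2F d) :
    (parityOpFun f : Cfg d → ℂ) =ᵐ[volume] parityFun (f : Cfg d → ℂ) :=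
  MemLp.coeFn_toLp _

lemma parityOpFun_add (f g : L2F d) : parityOpFun (f + g) = parityOpFun f + parityOpFun g := by
  apply Lp.ext
  have h4 : parityFun ((f + g : L2F d) : Cfg d → ℂ)
      =ᵐ[volume] parityFun (f : Cfg d → ℂ) + parityFun (g : Cfg d → ℂ) := by
    have := (Measure.measurePreserving_neg
      (volume : Measure (Cfg d))).quasiMeasurePreserving.ae_eq_comp (Lp.coeFn_add f g)
    filter_upwards [this] with t ht
    simpa [parityFun] using ht
  filter_upwards [parityOpFun_coe (f + g), parityOpFun_coe f, parityOpFun_coe g, h4,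
    Lp.coeFn_add (parityOpFun f) (parityOpFun g)] with t h1 h2 h3 h4' h5
  rw [h1, h4', h5, Pi.add_apply, Pi.add_apply, h2, h3]

lemma parityOpFun_smul (c : ℂ) (f : L2F d) : parityOpFun (c • f) = c • parityOpFun f := by
  apply Lp.ext
  have h4 : parityFun ((c • f : L2F d) : Cfg d → ℂ)
      =ᵐ[volume] c • parityFun (f : Cfg d → ℂ) := by
    have := (Measure.measurePreserving_neg
      (volume : Measure (Cfg d))).quasiMeasurePreserving.ae_eq_comp (Lp.coeFn_smul c f)
    filter_upwards [this] with t ht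
    simpa [parityFun] using ht
  filter_upwards [parityOpFun_coe (c • f), parityOpFun_coe f, h4,
    Lp.coeFn_smul c (parityOpFun f)] with t h1 h2 h4' h5
  rw [h1, h4', h5, Pi.smul_apply, Pi.smul_apply, h2]

lemma parityOpFun_norm (f : L2F d) : ‖parityOpFun f‖ = ‖f‖ := by
  rw [parityOpFun, Lp.norm_toLp]
  have h1 : eLpNorm (parityFun (f : Cfg d → ℂ)) 2 volume
      = eLpNorm ((f : Cfg d → ℂ) ∘ fun t => -t) 2 volume := rfl
  rw [h1, eLpNorm_comp_measurePreserving (Lp.aestronglyMeasurable f)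
    (Measure.measurePreserving_neg volume), Lp.norm_def]

/-- The parity operator, as a linear map. -/
noncomputable def parityLM : L2F d →ₗ[ℂ] L2F d where
  toFun := parityOpFun
  map_add' := parityOpFun_add
  map_smul' := parityOpFun_smul

/-- The parity operator `P` on `L²(ℝ^d)`. -/
noncomputable def parityOp : Op d :=
  LinearMap.mkContinuous (parityLM : L2F d →ₗ[ℂ] L2F d) 1
    (fun f => by simp [parityLM, parityOpFun_norm f])

/-- The translation of an operator, `α_z(T) = π(z) T π(z)*`. -/
noncomputable def opTrans (z : Phase d) (T : Op d) : Op d :=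
  ((tfShift z).comp T).comp (adjoint (tfShift z))

/-- The involution of an operator, `Ť = P T P`. -/
noncomputable def opInv (T : Op d) : Op d := (parityOp.comp T).comp parityOp

/-- The convolution of two operators, `S ⋆ T(z) = tr(S α_z(Ť))`. -/
noncomputable def opConv (S T : Op d) (z : Phase d) : ℂ := traceOp (S.comp (opTrans z (opInv T)))

/-- The reproducing-type kernel `K_γ(z,w) = γ* π(z)* π(w) γ` (for `‖γ‖_{S²} = 1`). -/
noncomputable def kernelK (γ : Op d) (z w : Phase d) : Op d :=
  ((adjoint γ).comp (adjoint (tfShift z))).comp ((tfShift w).comp γ)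

/-- The integral operator `I_𝒦 F(z) = ∫ 𝒦(z,w) F(w) dw`. -/
noncomputable def IK (K : Phase d → Phase d → Op d) (F : Phase d → Op d) (z : Phase d) : Op d :=
  ∫ w : Phase d, (K z w).comp (F w)

/-- The kernel `𝒦` induces a bounded, boundedly invertible integral operator on
`𝔙_γ(𝔐¹) ⊂ L¹(ℝ^{2d}, S²)`. -/
noncomputable def GoodKernel (γ : Op d) (K : Phase d → Phase d → Op d) : Prop :=
  (∀ σ : Op d, MemM1 σ → ∃ τ : Op d, MemM1 τ ∧ IK K (opSTFT γ σ) = opSTFT γ τ) ∧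
  (∃ C : ℝ, ∀ σ : Op d, MemM1 σ →
    (∫ z : Phase d, hsNorm (IK K (opSTFT γ σ) z)) ≤ C * ∫ z : Phase d, hsNorm (opSTFT γ σ z)) ∧
  (∃ c : ℝ, 0 < c ∧ ∀ σ : Op d, MemM1 σ →
    c * (∫ z : Phase d, hsNorm (opSTFT γ σ z)) ≤ ∫ z : Phase d, hsNorm (IK K (opSTFT γ σ) z)) ∧
  (∀ σ : Op d, MemM1 σ → ∃ τ : Op d, MemM1 τ ∧ IK K (opSTFT γ τ) = opSTFT γ σ)

/-- The constant `θ_𝒦 = sup_{σ ∈ 𝔐¹} ‖𝔙_γσ‖_{L¹}/‖I_𝒦(𝔙_γσ)‖_{L¹}`. -/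
noncomputable def thetaK (γ : Op d) (K : Phase d → Phase d → Op d) : ℝ :=
  sSup {r : ℝ | ∃ σ : Op d, MemM1 σ ∧
    r = (∫ z : Phase d, hsNorm (opSTFT γ σ z)) / ∫ z : Phase d, hsNorm (IK K (opSTFT γ σ) z)}

/-- The mixed-state localization operator on `L²(ℝ^d)`:
`A_Ω f = ∫_Ω π(z) γγ* π(z)* f dz` (the integral interpreted in the Bochner sense). -/
noncomputable def locOpL2 (γ : Op d) (Ω : Set (Phase d)) (f : L2F d) : L2F d :=
  ∫ z in Ω, tfShift z (γ ((adjoint γ) ((adjoint (tfShift z)) f)))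

/-- The mixed-state localization operator on `S²`:
`A_Ω ρ = ∫_Ω π(z) γ 𝔙_γρ(z) dz` (the integral interpreted in the Bochner sense). -/
noncomputable def locOpS2 (γ : Op d) (Ω : Set (Phase d)) (ρ : Op d) : Op d :=
  ∫ z in Ω, ((tfShift z).comp γ).comp (opSTFT γ ρ z)

/-- The `n`-th Hermite function
`h_n(t) = 2^{1/4}/√(n!) (-1/(2√π))ⁿ e^{πt²} dⁿ/dtⁿ e^{-2πt²}`. -/
noncomputable def hermiteFun (n : ℕ) (t : ℝ) : ℝ :=
  (2 : ℝ) ^ ((1 : ℝ)/4) / Real.sqrt (n.factorial) * (-1 / (2 * Real.sqrt Real.pi)) ^ n *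
    Real.exp (Real.pi * t ^ 2) * deriv^[n] (fun s : ℝ => Real.exp (-(2 * Real.pi) * s ^ 2)) t

/-- `h : ℕ → L²(ℝ)` is the family of Hermite functions. -/
noncomputable def IsHermite (h : ℕ → L2F 1) : Prop :=
  ∀ n, (h n : Cfg 1 → ℂ) =ᵐ[volume] fun t => (hermiteFun n (t 0) : ℂ)

/-- `h : ℕ₀^d → L²(ℝ^d)` is the family of tensor-product Hermite functions. -/
noncomputable def IsHermiteD (h : (Fin d → ℕ) → L2F d) : Prop :=
  ∀ k, (h k : Cfg d → ℂ) =ᵐ[volume] fun t => ∏ j, (hermiteFun (k j) (t j) : ℂ)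

/-- The normalized Gaussian `h₀(t) = 2^{d/4} e^{-π|t|²}`. -/
noncomputable def gaussFun (d : ℕ) : Cfg d → ℂ := fun t =>
  (((2 : ℝ) ^ ((d : ℝ)/4) * Real.exp (-Real.pi * ‖t‖ ^ 2) : ℝ) : ℂ)

/-- `h0 ∈ L²(ℝ^d)` is the normalized Gaussian. -/
noncomputable def IsGauss (h0 : L2F d) : Prop := (h0 : Cfg d → ℂ) =ᵐ[volume] gaussFun d

/-- The generalized binomial coefficient `binom(x, m)` for real `x`. -/
noncomputable def genBinom (x : ℝ) (m : ℕ) : ℝ := (∏ i ∈ Finset.range m, (x - i)) / m.factorial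

/-- The generalized Laguerre polynomial
`L_k^α(t) = Σ_{j=0}^k (-1)^j binom(k+α, k-j) tʲ/j!` (for real `α`, via generalized
binomial coefficients; for negative integer `α` this is consistent with the
reflection identity). -/
noncomputable def laguerre (k : ℕ) (α : ℝ) (t : ℝ) : ℝ :=
  ∑ j ∈ Finset.range (k + 1), (-1 : ℝ) ^ j * genBinom ((k : ℝ) + α) (k - j) * t ^ j / j.factorial

/-- The polyradial coordinates of a phase-space point. -/
noncomputable def polyrad (z : Phase d) : Fin d → ℝ := fun j => Real.sqrt (z.1 j ^ 2 + z.2 j ^ 2)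

/-- The Reinhardt domain with Reinhardt shadow `W`. -/
noncomputable def reinhardt (W : Set (Fin d → ℝ)) : Set (Phase d) := polyrad ⁻¹' W

/-- The constant `C_{n,m}(Δ)` from the double orthogonality relation over the Reinhardt
domain with shadow `W`:
`C_{n,m}(Δ) = (2π)^d (m!/n!) π^{|n-m|} ∫_W r^{2n-2m+1} e^{-π|r|²} (Π_j L_{m_j}^{n_j-m_j}(π r_j²))² dr`. -/
noncomputable def Cnm (W : Set (Fin d → ℝ)) (n m : Fin d → ℕ) : ℝ :=
  (2 * Real.pi) ^ d * ((∏ j, ((m j).factorial : ℝ)) / ∏ j, ((n j).factorial : ℝ)) *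
    Real.pi ^ (∑ j, ((n j : ℤ) - (m j : ℤ))) *
    ∫ r in W, (∏ j, (r j) ^ (2 * (n j : ℤ) - 2 * (m j : ℤ) + 1)) *
      Real.exp (-Real.pi * ∑ j, (r j) ^ 2) *
      (∏ j, laguerre (m j) ((n j : ℝ) - (m j : ℝ)) (Real.pi * (r j) ^ 2)) ^ 2

/-- The constant `C_{n,m}(D_R(0)) = (n!/m!) ∫₀^{πR²} t^{m-n} (L_n^{m-n}(t))² e^{-t} dt`. -/
noncomputable def CnmDisk (n m : ℕ) (R : ℝ) : ℝ :=
  ((n.factorial : ℝ) / (m.factorial : ℝ)) *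
    ∫ t in Set.Ioc (0 : ℝ) (Real.pi * R ^ 2),
      t ^ ((m : ℝ) - (n : ℝ)) * (laguerre n ((m : ℝ) - (n : ℝ)) t) ^ 2 * Real.exp (-t)

end QLS

/-! By the layer-cake formula, `∫_A f = ∫_0^∞ |A ∩ {f > t}| dt ≤ ∫_0^∞ min(|A|, |{f > t}|) dt`.
For the Gaussian `f(w) = e^{-π|z-w|²/2}` the superlevel set `{f > t}` is a disk of area
`-2 log t` (empty for `t ≥ 1`), so for `|A| ≤ ν` the integral is at most
`∫_0^1 min(ν, -2 log t) dt = 2(1 - e^{-ν/2})`; the split point is `t = e^{-ν/2}`. -/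

namespace QLS

open Set
open scoped Real

theorem setLIntegral_ofReal_le_lintegral_min_measure {α : Type*} [MeasurableSpace α]
    (μ : Measure α) {f : α → ℝ} (hf_nonneg : 0 ≤ f) (hf : Measurable f) (A : Set α) :
    ∫⁻ x in A, ENNReal.ofReal (f x) ∂μ ≤ ∫⁻ t in Ioi 0, min (μ A) (μ {x | t < f x}) := by
  rw [lintegral_eq_lintegral_meas_lt _ (.of_forall hf_nonneg) hf.aemeasurable]
  refine lintegral_mono fun t => le_min ?_ (Measure.restrict_apply_le _ _)
  exact (measure_mono (subset_univ _)).trans (Measure.restrict_apply_univ A).le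

def phaseEquivPlane : Phase 1 ≃ᵐ EuclideanSpace ℝ (Fin 2) :=
  let line : Cfg 1 ≃ᵐ ℝ :=
    (MeasurableEquiv.toLp 2 (Fin 1 → ℝ)).symm.trans (MeasurableEquiv.funUnique (Fin 1) ℝ)
  (line.prodCongr line).trans
    (MeasurableEquiv.finTwoArrow.symm.trans (MeasurableEquiv.toLp 2 (Fin 2 → ℝ)))

theorem measurePreserving_phaseEquivPlane :
    MeasurePreserving phaseEquivPlane volume volume := by
  have line : MeasurePreserving ((MeasurableEquiv.toLp 2 (Fin 1 → ℝ)).symm.trans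
      (MeasurableEquiv.funUnique (Fin 1) ℝ)) volume volume :=
    (volume_preserving_funUnique (Fin 1) ℝ).comp
      (EuclideanSpace.volume_preserving_symm_measurableEquiv_toLp (Fin 1))
  exact ((EuclideanSpace.volume_preserving_symm_measurableEquiv_toLp (Fin 2)).symm.comp
    (volume_preserving_finTwoArrow ℝ).symm).comp (line.prod line)

theorem phaseEquivPlane_apply (u : Phase 1) : phaseEquivPlane u = !₂[u.1 0, u.2 0] := rfl

theorem norm_phaseEquivPlane_sub_sq (w z : Phase 1) :
    ‖phaseEquivPlane w - phaseEquivPlane z‖ ^ 2 = pnormSq (w - z) := by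
  simp [EuclideanSpace.norm_sq_eq, Fin.sum_univ_two, pnormSq, phaseEquivPlane_apply]

theorem volume_setOf_pnormSq_sub_lt (z : Phase 1) (s : ℝ) :
    volume {w | pnormSq (w - z) < s} = ENNReal.ofReal (π * s) := by
  have hball :
      {w | pnormSq (w - z) < s} = phaseEquivPlane ⁻¹' Metric.ball (phaseEquivPlane z) √s := by
    ext w
    rw [mem_ofPred_eq, mem_preimage, Metric.mem_ball, dist_eq_norm, Real.lt_sqrt (norm_nonneg _),
      norm_phaseEquivPlane_sub_sq]
  rw [hball,
    measurePreserving_phaseEquivPlane.measure_preimage measurableSet_ball.nullMeasurableSet,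
    EuclideanSpace.volume_ball_fin_two, ← ENNReal.ofReal_pow (Real.sqrt_nonneg s), Real.sq_sqrt',
    ← ENNReal.ofReal_mul (by positivity), mul_comm]
  rcases le_total s 0 with hs | hs
  · simp [hs, ENNReal.ofReal_of_nonpos (mul_nonpos_of_nonneg_of_nonpos Real.pi_pos.le hs)]
  · rw [max_eq_left hs]

theorem pnormSq_sub_comm {d : ℕ} (z w : Phase d) : pnormSq (z - w) = pnormSq (w - z) := by
  simp only [pnormSq, Prod.fst_sub, Prod.snd_sub, norm_sub_rev]

theorem volume_gaussian_superlevel (z : Phase 1) {t : ℝ} (ht : 0 < t) :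
    volume {w | t < Real.exp (-π * pnormSq (z - w) / 2)} = ENNReal.ofReal (-2 * Real.log t) := by
  have hset : {w | t < Real.exp (-π * pnormSq (z - w) / 2)}
      = {w | pnormSq (w - z) < -2 * Real.log t / π} := by
    ext w
    rw [mem_ofPred_eq, mem_ofPred_eq, ← Real.log_lt_iff_lt_exp ht, lt_div_iff₀ Real.pi_pos,
      pnormSq_sub_comm]
    constructor <;> intro h <;> linarith
  rw [hset, volume_setOf_pnormSq_sub_lt, mul_div_cancel₀ _ Real.pi_ne_zero]

theorem lintegral_Ioi_min_ofReal_neg_two_mul_log {ν : ℝ} (hν : 0 ≤ ν) :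
    ∫⁻ t in Ioi 0, min (ENNReal.ofReal ν) (ENNReal.ofReal (-2 * Real.log t))
      = ENNReal.ofReal (2 * (1 - Real.exp (-ν / 2))) := by
  set c := Real.exp (-ν / 2)
  have hc0 : 0 < c := Real.exp_pos _
  have hc1 : c ≤ 1 := Real.exp_le_one_iff.mpr (by linarith)
  have hlog_c : Real.log c = -ν / 2 := Real.log_exp _
  have below_c : ∫⁻ t in Ioc 0 c, min (ENNReal.ofReal ν) (ENNReal.ofReal (-2 * Real.log t))
      = ENNReal.ofReal (ν * c) := by
    rw [setLIntegral_congr_fun measurableSet_Ioc (g := fun _ => ENNReal.ofReal ν),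
      setLIntegral_const, Real.volume_Ioc, sub_zero, ← ENNReal.ofReal_mul hν]
    intro t ht
    refine min_eq_left (ENNReal.ofReal_le_ofReal ?_)
    linarith [Real.log_le_log ht.1 ht.2]
  have between : ∫⁻ t in Ioc c 1, min (ENNReal.ofReal ν) (ENNReal.ofReal (-2 * Real.log t))
      = ENNReal.ofReal (2 - 2 * c - ν * c) := by
    have hint : IntegrableOn (fun t => -2 * Real.log t) (Ioc c 1) :=
      (intervalIntegrable_iff_integrableOn_Ioc_of_le hc1).mp
        (intervalIntegral.intervalIntegrable_log'.const_mul _)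
    rw [setLIntegral_congr_fun measurableSet_Ioc (g := fun t => ENNReal.ofReal (-2 * Real.log t)),
      ← ofReal_integral_eq_lintegral_ofReal hint, ← intervalIntegral.integral_of_le hc1,
      intervalIntegral.integral_const_mul, integral_log, Real.log_one, hlog_c]
    · congr 1; ring
    · filter_upwards [ae_restrict_mem measurableSet_Ioc] with t ht
      rw [Pi.zero_apply]
      linarith [Real.log_nonpos (hc0.trans ht.1).le ht.2]
    · intro t ht
      refine min_eq_right (ENNReal.ofReal_le_ofReal ?_)
      linarith [Real.log_lt_log hc0 ht.1]
  have above_one :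
      ∫⁻ t in Ioi 1, min (ENNReal.ofReal ν) (ENNReal.ofReal (-2 * Real.log t)) = 0 := by
    rw [setLIntegral_congr_fun measurableSet_Ioi (g := fun _ => 0), lintegral_zero]
    intro t ht
    have : -2 * Real.log t ≤ 0 := by linarith [Real.log_pos (mem_Ioi.mp ht)]
    simp only [ENNReal.ofReal_of_nonpos this, min_zero]
  rw [← Ioc_union_Ioi_eq_Ioi hc0.le, lintegral_union measurableSet_Ioi Ioc_disjoint_Ioi_same,
    ← Ioc_union_Ioi_eq_Ioi hc1, lintegral_union measurableSet_Ioi Ioc_disjoint_Ioi_same,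
    below_c, between, above_one, add_zero, ← ENNReal.ofReal_add (by positivity)]
  · congr 1; ring
  · have hexp_mul : Real.exp (ν / 2) * c = 1 := by
      rw [← Real.exp_add, show ν / 2 + -ν / 2 = 0 by ring, Real.exp_zero]
    nlinarith [Real.add_one_le_exp (ν / 2)]

theorem pdisk_subset_ball {d : ℕ} (R : ℝ) (z : Phase d) : pdisk R z ⊆ Metric.ball z |R| := by
  intro w hw
  have hw : ‖(w - z).1‖ ^ 2 + ‖(w - z).2‖ ^ 2 < |R| ^ 2 := by rwa [sq_abs]
  rw [Metric.mem_ball, dist_eq_norm, Prod.norm_def, max_lt_iff]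
  exact ⟨lt_of_pow_lt_pow_left₀ 2 (abs_nonneg R) (by linarith [sq_nonneg ‖(w - z).2‖]),
    lt_of_pow_lt_pow_left₀ 2 (abs_nonneg R) (by linarith [sq_nonneg ‖(w - z).1‖])⟩

theorem volume_inter_pdisk_le_nuR {d : ℕ} (Ω : Set (Phase d)) (R : ℝ) (z : Phase d) :
    volume (Ω ∩ pdisk R z) ≤ ENNReal.ofReal (nuR Ω R) := by
  have : (volume : Measure (Phase d)).IsAddHaarMeasure := Measure.prod.instIsAddHaarMeasure _ _
  have hle : ∀ z, volume (Ω ∩ pdisk R z) ≤ volume (Metric.ball (0 : Phase d) |R|) := fun z =>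
    (measure_mono (inter_subset_right.trans (pdisk_subset_ball R z))).trans
      (Measure.addHaar_ball_center volume z |R|).le
  -- `nuR` is a real `⨆`, which bounds its terms only if they are bounded above.
  have hbdd : BddAbove (range fun z => (volume (Ω ∩ pdisk R z)).toReal) :=
    ⟨_, forall_mem_range.2 fun z => ENNReal.toReal_mono measure_ball_lt_top.ne (hle z)⟩
  rw [← ENNReal.ofReal_toReal ((hle z).trans_lt measure_ball_lt_top).ne]
  exact ENNReal.ofReal_le_ofReal (le_ciSup hbdd z)

theorem setIntegral_gaussian_le_of_volume_le (z : Phase 1) {A : Set (Phase 1)} {ν : ℝ}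
    (hν : 0 ≤ ν) (hA : volume A ≤ ENNReal.ofReal ν) :
    ∫ w in A, Real.exp (-π * pnormSq (z - w) / 2) ≤ 2 * (1 - Real.exp (-ν / 2)) := by
  have hg_nonneg : 0 ≤ fun w => Real.exp (-π * pnormSq (z - w) / 2) := fun _ =>
    (Real.exp_pos _).le
  have hg : Measurable fun w => Real.exp (-π * pnormSq (z - w) / 2) := by
    unfold pnormSq; fun_prop
  rw [integral_eq_lintegral_of_nonneg_ae (.of_forall hg_nonneg) hg.aestronglyMeasurable]
  refine ENNReal.toReal_le_of_le_ofReal ?_ ?_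
  · have := Real.exp_le_one_iff.mpr (show -ν / 2 ≤ 0 by linarith)
    linarith
  calc ∫⁻ w in A, ENNReal.ofReal (Real.exp (-π * pnormSq (z - w) / 2))
      ≤ ∫⁻ t in Ioi 0, min (volume A) (volume {w | t < Real.exp (-π * pnormSq (z - w) / 2)}) :=
        setLIntegral_ofReal_le_lintegral_min_measure volume hg_nonneg hg A
    _ ≤ ∫⁻ t in Ioi 0, min (ENNReal.ofReal ν) (ENNReal.ofReal (-2 * Real.log t)) :=
        setLIntegral_mono' measurableSet_Ioi fun t ht =>
          min_le_min hA (volume_gaussian_superlevel z ht).le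
    _ = ENNReal.ofReal (2 * (1 - Real.exp (-ν / 2))) :=
        lintegral_Ioi_min_ofReal_neg_two_mul_log hν

theorem gaussian_local_integral_bound_general
    (Ω : Set (Phase 1)) (R : ℝ) :
    (⨆ z : Phase 1, ∫ w in Ω ∩ pdisk R z, Real.exp (-Real.pi * pnormSq (z - w) / 2))
      ≤ 2 * (1 - Real.exp (-nuR Ω R / 2)) :=
  ciSup_le fun z => setIntegral_gaussian_le_of_volume_le z
    (Real.iSup_nonneg fun _ => ENNReal.toReal_nonneg) (volume_inter_pdisk_le_nuR Ω R z)

/-- For every measurable `Ω ⊂ ℝ²` and `R > 0`,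
`sup_z ∫_{Ω ∩ D_R(z)} e^{-π|z-w|²/2} dw ≤ 2(1 - e^{-ν(Ω,R)/2})`. -/
theorem gaussian_local_integral_bound
    (Ω : Set (Phase 1)) (hΩ : MeasurableSet Ω) (R : ℝ) (hR : 0 < R) :
    (⨆ z : Phase 1, ∫ w in Ω ∩ pdisk R z, Real.exp (-Real.pi * pnormSq (z - w) / 2))
      ≤ 2 * (1 - Real.exp (-nuR Ω R / 2)) :=
  gaussian_local_integral_bound_general Ω R

end QLS
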